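/- arXiv:2504.00854 — 7 statements merged into one kernel-verified Lean document; each statement's English description precedes it below -/
import Mathlib

section
/- Let S = ⟨13,14,15,16,17,18,20,22,23⟩. The set of natural numbers l such that all four of l, l+1, l+4, l+6 lie in S is exactly {14, 16, 22} ∪ {l ∈ ℕ : l ≥ 26}. In particular the least such l is 14. -/
private lemma mem_iff_aux (n : ℕ) :
    n ∈ AddSubmonoid.closure ({13, 14, 15, 16, 17, 18, 20, 22, 23} : Set ℕ) ↔
      (n = 0 ∨ (13 ≤ n ∧ n ≤ 18) ∨ n = 20 ∨ n = 22 ∨ n = 23 ∨ 26 ≤ n) := by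
  set S := AddSubmonoid.closure ({13, 14, 15, 16, 17, 18, 20, 22, 23} : Set ℕ) with hS
  have hgen : ∀ m : ℕ, m ∈ ({13, 14, 15, 16, 17, 18, 20, 22, 23} : Set ℕ) → m ∈ S :=
    fun m hm => AddSubmonoid.subset_closure hm
  have g13 : (13 : ℕ) ∈ S := hgen 13 (by simp)
  have g14 : (14 : ℕ) ∈ S := hgen 14 (by simp)
  have g15 : (15 : ℕ) ∈ S := hgen 15 (by simp)
  have g16 : (16 : ℕ) ∈ S := hgen 16 (by simp)
  have g17 : (17 : ℕ) ∈ S := hgen 17 (by simp)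
  have g18 : (18 : ℕ) ∈ S := hgen 18 (by simp)
  have g20 : (20 : ℕ) ∈ S := hgen 20 (by simp)
  have g22 : (22 : ℕ) ∈ S := hgen 22 (by simp)
  have g23 : (23 : ℕ) ∈ S := hgen 23 (by simp)
  constructor
  · intro hn
    refine AddSubmonoid.closure_induction ?_ ?_ ?_ hn
    · intro x hx
      simp only [Set.mem_insert_iff, Set.mem_singleton_iff] at hx
      omega
    · omega
    · intro a b _ _ ha hb
      omega
  · intro hn
    rcases hn with h | h | h | h | h | h
    · simpa [h] using S.zero_mem
    · obtain ⟨h1, h2⟩ := h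
      interval_cases n <;> assumption
    · subst h; exact g20
    · subst h; exact g22
    · subst h; exact g23
    · -- all n ≥ 26
      have key : ∀ k, ∀ n, n ≤ k → 26 ≤ n → n ∈ S := by
        intro k
        induction k with
        | zero => intro n h1 h2; omega
        | succ k ih =>
          intro n h1 h2
          by_cases hle : n ≤ 38
          · have h26 : (26 : ℕ) ∈ S := by have := S.add_mem g13 g13; simpa using this
            have h27 : (27 : ℕ) ∈ S := by have := S.add_mem g13 g14; simpa using this
            have h28 : (28 : ℕ) ∈ S := by have := S.add_mem g13 g15; simpa using this
            have h29 : (29 : ℕ) ∈ S := by have := S.add_mem g13 g16; simpa using this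
            have h30 : (30 : ℕ) ∈ S := by have := S.add_mem g13 g17; simpa using this
            have h31 : (31 : ℕ) ∈ S := by have := S.add_mem g13 g18; simpa using this
            have h32 : (32 : ℕ) ∈ S := by have := S.add_mem g14 g18; simpa using this
            have h33 : (33 : ℕ) ∈ S := by have := S.add_mem g13 g20; simpa using this
            have h34 : (34 : ℕ) ∈ S := by have := S.add_mem g14 g20; simpa using this
            have h35 : (35 : ℕ) ∈ S := by have := S.add_mem g13 g22; simpa using this
            have h36 : (36 : ℕ) ∈ S := by have := S.add_mem g13 g23; simpa using this
            have h37 : (37 : ℕ) ∈ S := by have := S.add_mem g14 g23; simpa using this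
            have h38 : (38 : ℕ) ∈ S := by have := S.add_mem g15 g23; simpa using this
            interval_cases n <;> assumption
          · have hm : n - 13 ∈ S := ih (n - 13) (by omega) (by omega)
            have := S.add_mem hm g13
            have heq : n - 13 + 13 = n := by omega
            rwa [heq] at this
      exact key n n le_rfl h

/-- For S = ⟨13,14,15,16,17,18,20,22,23⟩, the set of l with
l, l+1, l+4, l+6 all in S is exactly {14, 16, 22} ∪ {l : 26 ≤ l};
in particular its least element is 14. -/
theorem stmt2 (S : AddSubmonoid ℕ)
    (hS : S = AddSubmonoid.closure ({13, 14, 15, 16, 17, 18, 20, 22, 23} : Set ℕ)) :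
    {l : ℕ | l ∈ S ∧ l + 1 ∈ S ∧ l + 4 ∈ S ∧ l + 6 ∈ S} =
      ({14, 16, 22} : Set ℕ) ∪ {l : ℕ | 26 ≤ l} ∧
    IsLeast {l : ℕ | l ∈ S ∧ l + 1 ∈ S ∧ l + 4 ∈ S ∧ l + 6 ∈ S} 14 := by
  subst hS
  have hset : {l : ℕ | l ∈ AddSubmonoid.closure ({13, 14, 15, 16, 17, 18, 20, 22, 23} : Set ℕ)
      ∧ l + 1 ∈ AddSubmonoid.closure ({13, 14, 15, 16, 17, 18, 20, 22, 23} : Set ℕ)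
      ∧ l + 4 ∈ AddSubmonoid.closure ({13, 14, 15, 16, 17, 18, 20, 22, 23} : Set ℕ)
      ∧ l + 6 ∈ AddSubmonoid.closure ({13, 14, 15, 16, 17, 18, 20, 22, 23} : Set ℕ)} =
      ({14, 16, 22} : Set ℕ) ∪ {l : ℕ | 26 ≤ l} := by
    ext l
    simp only [Set.mem_setOf_eq, Set.mem_union, Set.mem_insert_iff, Set.mem_singleton_iff,
      mem_iff_aux]
    omega
  refine ⟨hset, ?_, ?_⟩
  · rw [Set.ext_iff] at hset
    exact (hset 14).mpr (by simp)
  · intro l hl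
    rw [Set.ext_iff] at hset
    have := (hset l).mp hl
    simp only [Set.mem_union, Set.mem_insert_iff, Set.mem_singleton_iff, Set.mem_setOf_eq] at this
    omega
end

section
/- For every integer r ≥ 12, the numerical semigroup S_r generated by {r, r+1, ..., 2r−8, 2r−7} ∪ {2r−4, 2r−3} has gap set exactly {1, ..., r−1} ∪ {2r−6, 2r−5, 2r−2, 2r−1}; in particular S_r has genus r + 3 and Frobenius number 2r − 1. -/
/-!
Every generator is at least `r`, so a sum of two or more generators is at least `2r`: below `2r`
the semigroup consists of `0` and the generators, which leaves exactly the listed gaps. Above,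
sums of two generators fill the window `[2r, 3r)`, and adding copies of `r` fills everything
beyond it.
-/

open Set

namespace AddSubmonoid

theorem eq_zero_or_mem_or_two_mul_le_of_mem_closure {G : Set ℕ} {m : ℕ} (hG : ∀ g ∈ G, m ≤ g)
    {n : ℕ} (hn : n ∈ closure G) : n = 0 ∨ n ∈ G ∨ 2 * m ≤ n := by
  induction hn using closure_induction with
  | mem x hx => exact .inr (.inl hx)
  | zero => exact .inl rfl
  | add x y _ _ ihx ihy =>
    rcases ihx with rfl | hx | hx
    · simpa using ihy
    · rcases ihy with rfl | hy | hy
      · simpa using .inr (.inl hx)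
      · exact .inr (.inr (by have := hG x hx; have := hG y hy; omega))
      · omega
    · omega

theorem Ici_subset_of_Ico_subset {S : AddSubmonoid ℕ} {a b : ℕ} (ha₀ : 0 < a) (ha : a ∈ S)
    (hab : Ico b (b + a) ⊆ S) : Ici b ⊆ S := by
  intro n hn
  induction n using Nat.strong_induction_on with
  | _ n ih =>
    by_cases hlt : n < b + a
    · exact hab ⟨hn, hlt⟩
    · have hsplit : n = (n - a) + a := by omega
      rw [hsplit]
      exact add_mem (ih (n - a) (by omega) (by simp only [mem_Ici] at hn ⊢; omega)) ha

end AddSubmonoid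

def srGenerators (r : ℕ) : Set ℕ := Icc r (2 * r - 7) ∪ {2 * r - 4, 2 * r - 3}

namespace srGenerators

variable {r : ℕ}

theorem mem_iff {x : ℕ} :
    x ∈ srGenerators r ↔ (r ≤ x ∧ x ≤ 2 * r - 7) ∨ x = 2 * r - 4 ∨ x = 2 * r - 3 := by
  simp only [srGenerators, mem_union, mem_Icc, mem_insert_iff, mem_singleton_iff]

theorem le_of_mem (hr : 7 ≤ r) {g : ℕ} (hg : g ∈ srGenerators r) : r ≤ g := by
  rcases mem_iff.1 hg with ⟨h, -⟩ | h | h <;> omega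

theorem Ico_subset_closure (hr : 10 ≤ r) :
    Ico (2 * r) (2 * r + r) ⊆ AddSubmonoid.closure (srGenerators r) := by
  have hsmall : ∀ x, r ≤ x → x ≤ 2 * r - 7 → x ∈ AddSubmonoid.closure (srGenerators r) :=
    fun x h₁ h₂ => AddSubmonoid.subset_closure (mem_iff.2 (.inl ⟨h₁, h₂⟩))
  rintro n ⟨hlo, hhi⟩
  -- `[2r, 4r-14]` is a sum of two generators from `[r, 2r-7]`, and `(2r-4) + [r, 2r-7]` covers
  -- `[3r-4, 4r-11]`; for `r ≥ 10` the two ranges overlap and cover `[2r, 3r)`.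
  by_cases hn : n ≤ 4 * r - 14
  · have hsplit : n = max r (n - (2 * r - 7)) + (n - max r (n - (2 * r - 7))) := by omega
    rw [hsplit]
    exact add_mem (hsmall _ (by omega) (by omega)) (hsmall _ (by omega) (by omega))
  · have hsplit : n = (2 * r - 4) + (n - (2 * r - 4)) := by omega
    rw [hsplit]
    exact add_mem (AddSubmonoid.subset_closure (mem_iff.2 (.inr (.inl rfl))))
      (hsmall _ (by omega) (by omega))

theorem mem_closure_of_two_mul_le (hr : 10 ≤ r) {n : ℕ} (hn : 2 * r ≤ n) :
    n ∈ AddSubmonoid.closure (srGenerators r) :=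
  AddSubmonoid.Ici_subset_of_Ico_subset (by omega)
    (AddSubmonoid.subset_closure (mem_iff.2 (.inl ⟨le_rfl, by omega⟩)))
    (Ico_subset_closure hr) hn

theorem mem_closure_iff (hr : 10 ≤ r) {n : ℕ} :
    n ∈ AddSubmonoid.closure (srGenerators r) ↔ n = 0 ∨ n ∈ srGenerators r ∨ 2 * r ≤ n := by
  refine ⟨AddSubmonoid.eq_zero_or_mem_or_two_mul_le_of_mem_closure (fun _ => le_of_mem (by omega)),
    ?_⟩
  rintro (rfl | h | h)
  · exact zero_mem _
  · exact AddSubmonoid.subset_closure h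
  · exact mem_closure_of_two_mul_le hr h

theorem gaps_eq (hr : 10 ≤ r) :
    {n : ℕ | n ∉ AddSubmonoid.closure (srGenerators r)} =
      Icc 1 (r - 1) ∪ ({2 * r - 6, 2 * r - 5, 2 * r - 2, 2 * r - 1} : Set ℕ) := by
  ext n
  simp only [mem_ofPred_eq, mem_closure_iff hr, mem_iff, mem_union, mem_Icc, mem_insert_iff,
    mem_singleton_iff]
  omega

theorem ncard_gaps (hr : 10 ≤ r) :
    {n : ℕ | n ∉ AddSubmonoid.closure (srGenerators r)}.ncard = r + 3 := by
  have hdisj : Disjoint (Icc 1 (r - 1)) ({2 * r - 6, 2 * r - 5, 2 * r - 2, 2 * r - 1} : Set ℕ) := by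
    simp only [disjoint_left, mem_Icc, mem_insert_iff, mem_singleton_iff]
    omega
  rw [gaps_eq hr, ncard_union_eq hdisj, ncard_Icc_nat,
    ncard_insert_of_notMem (by simp only [mem_insert_iff, mem_singleton_iff]; omega),
    ncard_insert_of_notMem (by simp only [mem_insert_iff, mem_singleton_iff]; omega),
    ncard_pair (by omega)]
  omega

end srGenerators

/-- For r ≥ 12, the numerical semigroup generated by {r, r+1, ..., 2r−7} ∪ {2r−4, 2r−3}
has gap set {1,...,r−1} ∪ {2r−6, 2r−5, 2r−2, 2r−1}; in particular its genus is r+3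
and its Frobenius number is 2r−1. -/
theorem stmt4 (r : ℕ) (hr : 12 ≤ r) (S : AddSubmonoid ℕ)
    (hS : S = AddSubmonoid.closure
      ((Set.Icc r (2 * r - 7) ∪ {2 * r - 4, 2 * r - 3}) : Set ℕ)) :
    {n : ℕ | n ∉ S} =
      Set.Icc 1 (r - 1) ∪ ({2 * r - 6, 2 * r - 5, 2 * r - 2, 2 * r - 1} : Set ℕ) ∧
    {n : ℕ | n ∉ S}.ncard = r + 3 ∧
    (2 * r - 1) ∉ S ∧ (∀ n : ℕ, 2 * r - 1 < n → n ∈ S) := by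
  change S = AddSubmonoid.closure (srGenerators r) at hS
  subst hS
  refine ⟨srGenerators.gaps_eq (by omega), srGenerators.ncard_gaps (by omega), ?_,
    fun n hn => srGenerators.mem_closure_of_two_mul_le (by omega) (by omega)⟩
  rw [srGenerators.mem_closure_iff (by omega), srGenerators.mem_iff]
  omega
end

section
/- Let r ≥ 12 be an integer and S_r the numerical semigroup generated by {r, ..., 2r−7, 2r−4, 2r−3}. Let D = {2r, 2r−1, 2r−4, 2r−5} ∪ {2, 3, ..., r}. Then 3r is the least natural number l such that l − a ∈ S_r for all a ∈ D. -/
/-!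
Every generator of `S_r` is at least `r`, so a nonzero element of `S_r` is at least `r`. If `l`
works for `a = 2r` and `a = 2r - 1`, then `l - 2r` and `l - 2r + 1` both lie in `S_r`; they cannot
both be `0`, and they differ by one, so `l - 2r ≥ r`. Conversely `3r - a` is one of the generators
`r, r + 1, r + 4, r + 5` for the four large elements of `D` (this needs `r + 5 ≤ 2r - 7`), and is at
least `2r` for `a ≤ r`, hence in `S_r` because the conductor of `S_r` is `2r`.
-/

theorem AddSubmonoid.eq_zero_or_le_of_mem_closure {s : Set ℕ} {r n : ℕ} (hs : ∀ x ∈ s, r ≤ x)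
    (hn : n ∈ AddSubmonoid.closure s) : n = 0 ∨ r ≤ n := by
  induction hn using AddSubmonoid.closure_induction with
  | mem x hx => exact Or.inr (hs x hx)
  | zero => exact Or.inl rfl
  | add x y _ _ hx hy => omega

def semigroupSr (r : ℕ) : AddSubmonoid ℕ :=
  AddSubmonoid.closure (Set.Icc r (2 * r - 7) ∪ {2 * r - 4, 2 * r - 3})

namespace semigroupSr

variable {r n : ℕ}

theorem eq_zero_or_le (hr : 4 ≤ r) (hn : n ∈ semigroupSr r) : n = 0 ∨ r ≤ n :=
  AddSubmonoid.eq_zero_or_le_of_mem_closure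
    (by rintro x (⟨hx, -⟩ | rfl | rfl) <;> omega) hn

theorem mem_of_mem_Icc (h₁ : r ≤ n) (h₂ : n ≤ 2 * r - 7) : n ∈ semigroupSr r :=
  AddSubmonoid.subset_closure (Or.inl ⟨h₁, h₂⟩)

theorem two_mul_sub_four_mem : 2 * r - 4 ∈ semigroupSr r :=
  AddSubmonoid.subset_closure (Or.inr (Or.inl rfl))

theorem mem_of_two_mul_le_of_le (h₁ : 2 * r ≤ n) (h₂ : n ≤ 4 * r - 14) : n ∈ semigroupSr r := by
  rw [show n = min (n - r) (2 * r - 7) + (n - min (n - r) (2 * r - 7)) by omega]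
  exact add_mem (mem_of_mem_Icc (by omega) (by omega)) (mem_of_mem_Icc (by omega) (by omega))

/-- The conductor of `S_r` is `2r`: the sums `[r, 2r - 7] + [r, 2r - 7] = [2r, 4r - 14]` and
`2r - 4 + [r, 2r - 7]` together cover `[2r, 3r)`, and adding `r` reaches everything above. -/
theorem mem_of_two_mul_le (hr : 10 ≤ r) (hn : 2 * r ≤ n) : n ∈ semigroupSr r := by
  induction n using Nat.strong_induction_on with
  | _ n ih =>
    by_cases h3r : 3 * r ≤ n
    · rw [show n = r + (n - r) by omega]
      exact add_mem (mem_of_mem_Icc le_rfl (by omega)) (ih (n - r) (by omega) (by omega))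
    by_cases hlow : n ≤ 4 * r - 14
    · exact mem_of_two_mul_le_of_le hn hlow
    · rw [show n = (2 * r - 4) + (n - (2 * r - 4)) by omega]
      exact add_mem two_mul_sub_four_mem (mem_of_mem_Icc (by omega) (by omega))

end semigroupSr

open semigroupSr in
theorem exists_mem_semigroupSr_three_mul_eq_add {r a : ℕ} (hr : 12 ≤ r)
    (ha : a ∈ ({2 * r, 2 * r - 1, 2 * r - 4, 2 * r - 5} : Set ℕ) ∪ Set.Icc 2 r) :
    ∃ m ∈ semigroupSr r, 3 * r = a + m := by
  have hmem : 3 * r - a ∈ semigroupSr r := by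
    rcases ha with (rfl | rfl | rfl | rfl) | ⟨-, har⟩
    iterate 4 exact mem_of_mem_Icc (by omega) (by omega)
    exact mem_of_two_mul_le (by omega) (by omega)
  refine ⟨3 * r - a, hmem, ?_⟩
  rcases ha with (rfl | rfl | rfl | rfl) | ⟨-, har⟩ <;> omega

theorem three_mul_le_of_exists_add {S : AddSubmonoid ℕ} {r l : ℕ} (hr : 2 ≤ r)
    (hS : ∀ n ∈ S, n = 0 ∨ r ≤ n)
    (h₀ : ∃ m ∈ S, l = 2 * r + m) (h₁ : ∃ m ∈ S, l = 2 * r - 1 + m) : 3 * r ≤ l := by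
  obtain ⟨m₀, hm₀, rfl⟩ := h₀
  obtain ⟨m₁, hm₁, hl⟩ := h₁
  have := hS m₀ hm₀
  have := hS m₁ hm₁
  omega

/-- For r ≥ 12 and S_r = ⟨r, ..., 2r−7, 2r−4, 2r−3⟩, with
D = {2r, 2r−1, 2r−4, 2r−5} ∪ {2, ..., r}, the least natural number l such that
l − a ∈ S_r for every a ∈ D is 3r. -/
theorem stmt5 (r : ℕ) (hr : 12 ≤ r) (S : AddSubmonoid ℕ)
    (hS : S = AddSubmonoid.closure
      ((Set.Icc r (2 * r - 7) ∪ {2 * r - 4, 2 * r - 3}) : Set ℕ))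
    (D : Set ℕ)
    (hD : D = ({2 * r, 2 * r - 1, 2 * r - 4, 2 * r - 5} : Set ℕ) ∪ Set.Icc 2 r) :
    IsLeast {l : ℕ | ∀ a ∈ D, ∃ m ∈ S, l = a + m} (3 * r) := by
  obtain rfl : S = semigroupSr r := hS
  subst hD
  refine ⟨fun a ha => exists_mem_semigroupSr_three_mul_eq_add hr ha, fun l hl => ?_⟩
  exact three_mul_le_of_exists_add (by omega) (fun _ => semigroupSr.eq_zero_or_le (by omega))
    (hl (2 * r) (Or.inl (Or.inl rfl))) (hl (2 * r - 1) (Or.inl (Or.inr (Or.inl rfl))))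
end

section
/- Let Γ̃ be a numerical semigroup of genus γ and let g ≥ 6γ + 4 be an integer. Define Γ = {2n : n ∈ Γ̃} ∪ {2g − 1 − 2t : t ∈ ℤ, t ∉ Γ̃} ∩ ℕ (where t ranges over all integers, including negative ones, not lying in Γ̃). Then Γ is a numerical semigroup which is symmetric with Frobenius number 2g − 1, i.e. for every integer n with 0 ≤ n ≤ 2g−1, n ∈ Γ if and only if 2g−1−n ∉ Γ; in particular Γ has genus g. -/
/-!
Every gap `F` of a numerical semigroup `S` with `γ` gaps satisfies `F < 2γ`, since `i ↦ F - i`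
maps the elements of `S` below `F` injectively to gaps. Hence the odd elements `2g - 1 - 2t` of `Γ`
come from integers `t < 2γ`, and the sum of two of them is `2N` with `N ≥ 2g + 1 - 4γ ≥ 2γ`, so
`N ∈ S`; the other closure cases are immediate. Symmetry holds because `n ↦ 2g - 1 - n` exchanges
`2k` and `2g - 1 - 2k`, one lying in `Γ` exactly when `k ∈ S`, the other exactly when `k ∉ S`.
The same involution pairs the elements of `Γ` below `2g` with its gaps, so there are `g` gaps.
-/

theorem AddSubmonoid.lt_two_mul_ncard_of_notMem {S : AddSubmonoid ℕ}
    (hfin : {n : ℕ | n ∉ S}.Finite) {F : ℕ} (hF : F ∉ S) :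
    F < 2 * {n : ℕ | n ∉ S}.ncard := by
  classical
  set A := (Finset.range (F + 1)).filter (· ∈ S)
  set B := (Finset.range (F + 1)).filter (· ∉ S)
  have hAB : A.card + B.card = F + 1 := by
    rw [Finset.card_filter_add_card_filter_not, Finset.card_range]
  have hA : A.card ≤ B.card := by
    refine Finset.card_le_card_of_injOn (F - ·) (fun i hi => ?_) (fun i hi j hj hij => ?_)
    · simp only [A, B, Finset.mem_coe, Finset.mem_filter, Finset.mem_range] at hi ⊢
      refine ⟨by omega, fun hFi => hF ?_⟩
      simpa [Nat.add_sub_cancel' (by omega : i ≤ F)] using S.add_mem hi.2 hFi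
    · simp only [A, Finset.mem_coe, Finset.mem_filter, Finset.mem_range] at hi hj hij
      omega
  have hB : B.card ≤ {n : ℕ | n ∉ S}.ncard := by
    rw [← Set.ncard_coe_finset]
    exact Set.ncard_le_ncard (fun n hn => by simp_all [B]) hfin
  omega

theorem two_mul_ncard_compl_eq_of_symmetric {Γ : Set ℕ} {F : ℕ}
    (hbig : ∀ m, F < m → m ∈ Γ) (hsym : ∀ n ≤ F, n ∈ Γ ↔ F - n ∉ Γ) :
    2 * {n : ℕ | n ∉ Γ}.ncard = F + 1 := by
  classical
  set A := (Finset.range (F + 1)).filter (· ∈ Γ)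
  set B := (Finset.range (F + 1)).filter (· ∉ Γ)
  have hgaps : {n : ℕ | n ∉ Γ} = B := by
    ext n
    simp only [B, Set.mem_ofPred_eq, Finset.coe_filter, Finset.mem_range, Nat.lt_succ_iff]
    exact ⟨fun hn => ⟨not_lt.1 fun h => hn (hbig n h), hn⟩, And.right⟩
  have hAB : A.card + B.card = F + 1 := by
    rw [Finset.card_filter_add_card_filter_not, Finset.card_range]
  have hA : A.card = B.card := by
    refine Finset.card_nbij' (F - ·) (F - ·) (fun n hn => ?_) (fun n hn => ?_)
      (fun n hn => ?_) (fun n hn => ?_)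
    · simp only [A, B, Finset.mem_coe, Finset.mem_filter, Finset.mem_range] at hn ⊢
      exact ⟨by omega, (hsym n (by omega)).1 hn.2⟩
    · simp only [A, B, Finset.mem_coe, Finset.mem_filter, Finset.mem_range] at hn ⊢
      refine ⟨by omega, ?_⟩
      rw [hsym (F - n) (by omega), Nat.sub_sub_self (by omega)]
      exact hn.2
    all_goals
      simp only [A, B, Finset.mem_coe, Finset.mem_filter, Finset.mem_range] at hn
      dsimp only
      omega
  rw [hgaps, Set.ncard_coe_finset]
  omega

def stohrTorresSet (S : AddSubmonoid ℕ) (g : ℕ) : Set ℕ :=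
  {m : ℕ | ∃ n ∈ S, m = 2 * n} ∪
    {m : ℕ | ∃ t : ℤ, (∀ n ∈ S, (n : ℤ) ≠ t) ∧ (m : ℤ) = 2 * g - 1 - 2 * t}

namespace stohrTorresSet

variable {S : AddSubmonoid ℕ} {g c : ℕ}

theorem two_mul_mem_iff {k : ℕ} : 2 * k ∈ stohrTorresSet S g ↔ k ∈ S := by
  constructor
  · rintro (⟨n, hn, he⟩ | ⟨t, -, he⟩)
    · rwa [show k = n by omega]
    · omega
  · exact fun hk => Or.inl ⟨k, hk, rfl⟩

theorem mem_iff_of_add_two_mul_eq {m t : ℕ} (h : (m : ℤ) + 2 * t = 2 * g - 1) :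
    m ∈ stohrTorresSet S g ↔ t ∉ S := by
  constructor
  · rintro (⟨n, -, he⟩ | ⟨t', ht', he⟩) htS
    · omega
    · exact ht' t htS (by omega)
  · refine fun ht => Or.inr ⟨t, fun n hn hnt => ht ?_, by omega⟩
    rwa [← Int.ofNat_inj.1 hnt]

theorem int_lt_of_forall_ne (hc : ∀ n, n ∉ S → n < c) {t : ℤ}
    (ht : ∀ n ∈ S, (n : ℤ) ≠ t) : t < c := by
  by_contra! hct
  lift t to ℕ using (Int.natCast_nonneg c).trans hct
  have htS : t ∈ S := by
    by_contra htS
    exact absurd (hc t htS) (by omega)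
  exact ht t htS rfl

theorem mem_of_lt (hc : ∀ n, n ∉ S → n < c) (hcg : c ≤ g) {m : ℕ} (hm : 2 * g - 1 < m) :
    m ∈ stohrTorresSet S g := by
  rcases Nat.even_or_odd' m with ⟨k, rfl | rfl⟩
  · refine two_mul_mem_iff.2 (by_contra fun hk => ?_)
    exact absurd (hc k hk) (by omega)
  · exact Or.inr ⟨(g : ℤ) - 1 - k, fun n _ hn => by omega, by omega⟩

theorem add_mem (hc : ∀ n, n ∉ S → n < c) (h3c : 3 * c ≤ 2 * g) {a b : ℕ}
    (ha : a ∈ stohrTorresSet S g) (hb : b ∈ stohrTorresSet S g) :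
    a + b ∈ stohrTorresSet S g := by
  have even_add_odd : ∀ n ∈ S, ∀ t : ℤ, (∀ n ∈ S, (n : ℤ) ≠ t) →
      ∀ m : ℕ, (m : ℤ) = 2 * g - 1 - 2 * t + 2 * n → m ∈ stohrTorresSet S g :=
    fun n hn t ht m hm => Or.inr ⟨t - n, fun n' hn' hne =>
      ht (n' + n) (S.add_mem hn' hn) (by push_cast; omega), by omega⟩
  rcases ha with ⟨n₁, hn₁, rfl⟩ | ⟨t₁, ht₁, ha⟩ <;>
    rcases hb with ⟨n₂, hn₂, rfl⟩ | ⟨t₂, ht₂, hb⟩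
  · exact Or.inl ⟨n₁ + n₂, S.add_mem hn₁ hn₂, by ring⟩
  · exact even_add_odd n₁ hn₁ t₂ ht₂ _ (by push_cast; omega)
  · exact even_add_odd n₂ hn₂ t₁ ht₁ _ (by push_cast; omega)
  · have h₁ := int_lt_of_forall_ne hc ht₁
    have h₂ := int_lt_of_forall_ne hc ht₂
    rw [show a + b = 2 * (2 * g - 1 - t₁ - t₂).toNat by omega, two_mul_mem_iff]
    by_contra hN
    exact absurd (hc _ hN) (by omega)

theorem mem_iff_notMem_sub (hg : 1 ≤ g) {n : ℕ} (hn : n ≤ 2 * g - 1) :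
    n ∈ stohrTorresSet S g ↔ 2 * g - 1 - n ∉ stohrTorresSet S g := by
  rcases Nat.even_or_odd' n with ⟨k, rfl | rfl⟩
  · rw [two_mul_mem_iff, mem_iff_of_add_two_mul_eq (t := k) (by omega), not_not]
  · rw [mem_iff_of_add_two_mul_eq (t := g - 1 - k) (by omega),
      show 2 * g - 1 - (2 * k + 1) = 2 * (g - 1 - k) by omega, two_mul_mem_iff]

end stohrTorresSet

/-- Stöhr–Torres construction: if Γ̃ is a numerical semigroup of genus γ and
g ≥ 6γ + 4, then Γ = {2n : n ∈ Γ̃} ∪ {2g−1−2t : t ∈ ℤ, t ∉ Γ̃} ∩ ℕ is a numerical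
semigroup which is symmetric with Frobenius number 2g−1; in particular Γ has genus g. -/
theorem stmt6 (Γ' : AddSubmonoid ℕ) (γ g : ℕ)
    (hfin : {n : ℕ | n ∉ Γ'}.Finite) (hγ : {n : ℕ | n ∉ Γ'}.ncard = γ)
    (hg : 6 * γ + 4 ≤ g) (Γ : Set ℕ)
    (hΓ : Γ = {m : ℕ | ∃ n ∈ Γ', m = 2 * n} ∪
      {m : ℕ | ∃ t : ℤ, (∀ n ∈ Γ', (n : ℤ) ≠ t) ∧ (m : ℤ) = 2 * g - 1 - 2 * t}) :
    (0 : ℕ) ∈ Γ ∧ (∀ a ∈ Γ, ∀ b ∈ Γ, a + b ∈ Γ) ∧ {n : ℕ | n ∉ Γ}.Finite ∧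
    (2 * g - 1) ∉ Γ ∧ (∀ m : ℕ, 2 * g - 1 < m → m ∈ Γ) ∧
    (∀ n : ℕ, n ≤ 2 * g - 1 → (n ∈ Γ ↔ (2 * g - 1 - n) ∉ Γ)) ∧
    {n : ℕ | n ∉ Γ}.ncard = g := by
  obtain rfl : Γ = stohrTorresSet Γ' g := hΓ
  have hc : ∀ n, n ∉ Γ' → n < 2 * γ :=
    fun n hn => hγ ▸ Γ'.lt_two_mul_ncard_of_notMem hfin hn
  have hbig : ∀ m, 2 * g - 1 < m → m ∈ stohrTorresSet Γ' g :=
    fun m => stohrTorresSet.mem_of_lt hc (by omega)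
  have hsym : ∀ n ≤ 2 * g - 1, n ∈ stohrTorresSet Γ' g ↔ 2 * g - 1 - n ∉ stohrTorresSet Γ' g :=
    fun n => stohrTorresSet.mem_iff_notMem_sub (by omega)
  refine ⟨Or.inl ⟨0, Γ'.zero_mem, rfl⟩,
    fun a ha b hb => stohrTorresSet.add_mem hc (by omega) ha hb,
    (Set.finite_Iic (2 * g - 1)).subset fun n hn => not_lt.1 fun h => hn (hbig n h),
    fun h => (stohrTorresSet.mem_iff_of_add_two_mul_eq (t := 0) (by omega)).1 h Γ'.zero_mem,
    hbig, hsym, ?_⟩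
  have := two_mul_ncard_compl_eq_of_symmetric hbig hsym
  omega
end

section
/- Let n, d be integers with 1 ≤ n < d and 2n ≤ d + 1, and let S = {0} ∪ {d, d+1, ..., d+n−1} ∪ {m ∈ ℕ : m ≥ 2d}. Then S is a numerical semigroup, and the number of gaps ℓ of S such that ℓ + s ∈ S for every nonzero s ∈ S is exactly d − n (these gaps being precisely d+n, d+n+1, ..., 2d−1). -/
/-- For 1 ≤ n < d with 2n ≤ d + 1 and S = {0} ∪ {d,...,d+n−1} ∪ {m : m ≥ 2d},
S is a numerical semigroup, and the gaps ℓ of S with ℓ + s ∈ S for every nonzero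
s ∈ S are exactly d+n, ..., 2d−1; in particular there are d − n of them. -/
theorem stmt8 (n d : ℕ) (hn : 1 ≤ n) (hd : n < d) (h2n : 2 * n ≤ d + 1)
    (S : Set ℕ)
    (hS : S = {0} ∪ Set.Icc d (d + n - 1) ∪ {m : ℕ | 2 * d ≤ m}) :
    (0 : ℕ) ∈ S ∧ (∀ a ∈ S, ∀ b ∈ S, a + b ∈ S) ∧ {m : ℕ | m ∉ S}.Finite ∧
    {ℓ : ℕ | ℓ ∉ S ∧ ∀ s ∈ S, s ≠ 0 → ℓ + s ∈ S} = Set.Icc (d + n) (2 * d - 1) ∧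
    {ℓ : ℕ | ℓ ∉ S ∧ ∀ s ∈ S, s ≠ 0 → ℓ + s ∈ S}.ncard = d - n := by
  have hmem : ∀ m : ℕ, m ∈ S ↔ m = 0 ∨ (d ≤ m ∧ m ≤ d + n - 1) ∨ 2 * d ≤ m := by
    intro m
    simp only [hS, Set.mem_union, Set.mem_singleton_iff, Set.mem_Icc, Set.mem_setOf_eq]
    tauto
  have hset : {ℓ : ℕ | ℓ ∉ S ∧ ∀ s ∈ S, s ≠ 0 → ℓ + s ∈ S} = Set.Icc (d + n) (2 * d - 1) := by
    ext ℓ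
    simp only [Set.mem_setOf_eq, Set.mem_Icc]
    constructor
    · rintro ⟨hnot, habs⟩
      rw [hmem] at hnot
      push_neg at hnot
      obtain ⟨h0, h1, h2⟩ := hnot
      have hℓd : d + n ≤ ℓ := by
        by_contra hlt
        push_neg at hlt
        -- ℓ < d + n; also ℓ < 2d, ℓ ≠ 0
        have hdS : d ∈ S := by rw [hmem]; right; left; omega
        have h3 := habs d hdS (by omega)
        rw [hmem] at h3
        have hℓn : ℓ ≤ n - 1 := by omega
        have hd1S : d + n - 1 ∈ S := by rw [hmem]; right; left; omega
        have h4 := habs (d + n - 1) hd1S (by omega)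
        rw [hmem] at h4
        omega
      exact ⟨hℓd, by omega⟩
    · rintro ⟨h1, h2⟩
      refine ⟨by rw [hmem]; omega, ?_⟩
      intro s hs hs0
      rw [hmem] at hs ⊢
      omega
  refine ⟨by rw [hmem]; left; rfl, ?_, ?_, hset, ?_⟩
  · intro a ha b hb
    rw [hmem] at ha hb ⊢
    omega
  · apply Set.Finite.subset (Set.finite_Icc 0 (2 * d))
    intro m hm
    simp only [Set.mem_setOf_eq] at hm
    rw [hmem] at hm
    simp [Set.mem_Icc]
    omega
  · rw [hset, Set.ncard_eq_toFinset_card', Set.toFinset_Icc, Nat.card_Icc]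
    omega
end

section
/- Let n, d be integers with 1 < n < d. Then the sum over ℓ = 1, ..., d−1 of (|{i : 1 ≤ i ≤ n and n < i + ℓ ≤ d}| − 1) equals (n−1)(d−n−1). Moreover, for each ℓ in this range the set {i : 1 ≤ i ≤ n, n < i+ℓ ≤ d} is nonempty. -/
lemma stmt9_filter_eq (n d ℓ : ℕ) :
    ((Finset.Icc 1 n).filter (fun i => n < i + ℓ ∧ i + ℓ ≤ d))
      = Finset.Icc (max 1 (n + 1 - ℓ)) (min n (d - ℓ)) := by
  ext i
  simp only [Finset.mem_filter, Finset.mem_Icc, le_min_iff, max_le_iff]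
  omega

lemma stmt9_card (n d ℓ : ℕ) (h1 : 1 ≤ ℓ) (h2 : ℓ ≤ d - 1) (hn : 1 < n) (hd : n < d) :
    ((Finset.Icc 1 n).filter (fun i => n < i + ℓ ∧ i + ℓ ≤ d)).card
      = min (n + ℓ) d - max n ℓ := by
  rw [stmt9_filter_eq, Nat.card_Icc]
  omega

lemma stmt9_sum (n : ℕ) (hn : 1 < n) : ∀ d : ℕ, n < d →
    (∑ ℓ ∈ Finset.Icc 1 (d - 1), (min (n + ℓ) d - max n ℓ - 1))
      = (n - 1) * (d - n - 1) := by
  intro d hd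
  induction d, hd using Nat.le_induction with
  | base =>
    have : n + 1 - n - 1 = 0 := by omega
    rw [this, Nat.mul_zero]
    apply Finset.sum_eq_zero
    intro ℓ hℓ
    simp only [Finset.mem_Icc] at hℓ
    omega
  | succ d hd ih =>
    have hb : (1:ℕ) ≤ d := by omega
    have hd1 : d + 1 - 1 = d := by omega
    rw [hd1]
    have hsplit : (Finset.Icc 1 d) = insert d (Finset.Icc 1 (d - 1)) := by
      ext x; simp only [Finset.mem_insert, Finset.mem_Icc]; omega
    rw [hsplit, Finset.sum_insert (by simp [Finset.mem_Icc]; omega)]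
    have hterm : min (n + d) (d + 1) - max n d - 1 = 0 := by
      rcases le_total (n + d) (d + 1) with h | h <;> simp [min_eq_left, min_eq_right, h] <;> omega
    have hrest : ∀ ℓ ∈ Finset.Icc 1 (d - 1),
        min (n + ℓ) (d + 1) - max n ℓ - 1
          = (min (n + ℓ) d - max n ℓ - 1) + (if d - n + 1 ≤ ℓ then 1 else 0) := by
      intro ℓ hℓ
      simp only [Finset.mem_Icc] at hℓ
      rcases le_or_gt (n + ℓ) d with h | h
      · rw [min_eq_left h, min_eq_left (by omega)]
        simp only [if_neg (by omega : ¬ d - n + 1 ≤ ℓ)]; omega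
      · rw [min_eq_right (by omega), min_eq_right (by omega)]
        simp only [if_pos (by omega : d - n + 1 ≤ ℓ)]
        omega
    rw [Finset.sum_congr rfl hrest, Finset.sum_add_distrib, ih]
    have hind : (∑ ℓ ∈ Finset.Icc 1 (d - 1), (if d - n + 1 ≤ ℓ then 1 else 0))
        = ((Finset.Icc 1 (d - 1)).filter (fun ℓ => d - n + 1 ≤ ℓ)).card := by
      rw [Finset.card_filter]
    have hfilt : ((Finset.Icc 1 (d - 1)).filter (fun ℓ => d - n + 1 ≤ ℓ))
        = Finset.Icc (d - n + 1) (d - 1) := by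
      ext x; simp only [Finset.mem_filter, Finset.mem_Icc]; omega
    rw [hind, hfilt, Nat.card_Icc]
    have h1 : d - 1 + 1 - (d - n + 1) = n - 1 := by omega
    have h2 : d + 1 - n - 1 = (d - n - 1) + 1 := by omega
    rw [h1, h2, Nat.mul_add, Nat.mul_one, hterm]; omega

/-- Counting identity computing dim T¹₊ = (n−1)(d−n−1) for the monomial curve C_{d,n}:
∑_{ℓ=1}^{d−1} (|{i : 1 ≤ i ≤ n, n < i+ℓ ≤ d}| − 1) = (n−1)(d−n−1), and each of the
sets in question is nonempty. -/
theorem stmt9 (n d : ℕ) (hn : 1 < n) (hd : n < d) :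
    (∑ ℓ ∈ Finset.Icc 1 (d - 1),
        (((Finset.Icc 1 n).filter (fun i => n < i + ℓ ∧ i + ℓ ≤ d)).card - 1))
      = (n - 1) * (d - n - 1) ∧
    ∀ ℓ ∈ Finset.Icc 1 (d - 1),
      ((Finset.Icc 1 n).filter (fun i => n < i + ℓ ∧ i + ℓ ≤ d)).Nonempty := by
  constructor
  · rw [Finset.sum_congr rfl (fun ℓ hℓ => by
      simp only [Finset.mem_Icc] at hℓ
      rw [stmt9_card n d ℓ hℓ.1 hℓ.2 hn hd])]
    exact stmt9_sum n hn d hd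
  · intro ℓ hℓ
    simp only [Finset.mem_Icc] at hℓ
    refine ⟨max 1 (n + 1 - ℓ), ?_⟩
    simp only [Finset.mem_filter, Finset.mem_Icc, max_le_iff, le_max_iff]
    omega
end

section
/- Let S be a numerical semigroup of multiplicity at least 3 (i.e. 1 and 2 are both gaps of S), with conductor c (so c−1 is the Frobenius number). Let L = ℕ \ S be the gap set (of positive integers). Then every integer n with 2 ≤ n ≤ c − 2 is a sum of two gaps, i.e. {2, 3, ..., c−2} ⊆ L + L. -/
/-- Buchweitz–Oliveira (k = 1 case): if S is a numerical semigroup of multiplicity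
at least 3 with conductor c, and L = ℕ \ S its gap set, then every integer n with
2 ≤ n ≤ c − 2 is a sum of two gaps. -/
theorem stmt17 (S : AddSubmonoid ℕ) (hfin : {n : ℕ | n ∉ S}.Finite)
    (h1 : (1 : ℕ) ∉ S) (h2 : (2 : ℕ) ∉ S) (c : ℕ) (hc1 : 1 ≤ c)
    (hcond : ∀ m : ℕ, c ≤ m → m ∈ S) (hfrob : c - 1 ∉ S) :
    ∀ n : ℕ, 2 ≤ n → n ≤ c - 2 →
      ∃ a ∈ {m : ℕ | m ∉ S}, ∃ b ∈ {m : ℕ | m ∉ S}, n = a + b := by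
  intro n hn2 hnc
  classical
  by_contra hcon
  push_neg at hcon
  simp only [Set.mem_setOf_eq] at hcon
  -- hcon : ∀ a, a ∉ S → ∀ b, b ∉ S → n ≠ a + b
  have hc4 : 4 ≤ c := by omega
  have hfn : n + 1 ≤ c - 1 := by omega
  -- F : least gap ≥ n+1
  have hex : ∃ x, x ∉ S ∧ n + 1 ≤ x := ⟨c - 1, hfrob, hfn⟩
  set F := Nat.find hex with hFdef
  have hF : F ∉ S ∧ n + 1 ≤ F := Nat.find_spec hex
  have hFmin : ∀ x, n + 1 ≤ x → x < F → x ∈ S := by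
    intro x hx hlt
    by_contra hxS
    exact Nat.find_min hex hlt ⟨hxS, hx⟩
  -- every 1 ≤ j with j + n < F is a gap
  have base : ∀ j, 1 ≤ j → j + n + 1 ≤ F → j ∉ S := by
    intro j h1j hj hjS
    have hmem : F - j ∈ S := hFmin (F - j) (by omega) (by omega)
    have : j + (F - j) ∈ S := S.add_mem hjS hmem
    rw [show j + (F - j) = F by omega] at this
    exact hF.1 this
  -- key propagation rule
  have ruleC : ∀ a, a ∉ S → 1 ≤ a → a + 1 ≤ n → a + (F - n) ∉ S := by
    intro a haL h1a han hC
    have hna : n - a ∈ S := by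
      by_contra hna
      exact hcon a haL (n - a) hna (by omega)
    have hsum : (n - a) + (a + (F - n)) ∈ S := S.add_mem hna hC
    rw [show (n - a) + (a + (F - n)) = F by omega] at hsum
    exact hF.1 hsum
  have hD1 : 1 ≤ F - n := by omega
  -- chain: every j ≤ n-1 coprime-ish to D is a gap
  have chain : ∀ j, 1 ≤ j → j + 1 ≤ n → (F - n = 1 ∨ ¬ (F - n) ∣ j) → j ∉ S := by
    intro j
    induction j using Nat.strong_induction_on with
    | _ j ih =>
      intro h1j hjn hside
      by_cases hsmall : j + n + 1 ≤ F
      · exact base j h1j hsmall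
      · -- j ≥ F - n
        have hge : F - n ≤ j := by omega
        rcases eq_or_lt_of_le hge with heq | hlt
        · -- j = F - n : divisible, so D = 1 and j = 1
          rcases hside with hd | hd
          · rw [← heq, hd] at h1j ⊢
            exact h1
          · exact absurd (heq ▸ dvd_refl (F - n)) hd
        · set a := j - (F - n) with ha
          have h1a : 1 ≤ a := by omega
          have haj : a < j := by omega
          have han : a + 1 ≤ n := by omega
          have hsidea : F - n = 1 ∨ ¬ (F - n) ∣ a := by
            rcases hside with hd | hd
            · exact Or.inl hd
            · refine Or.inr fun hdvd => hd ?_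
              have : (F - n) ∣ (a + (F - n)) := Nat.dvd_add hdvd (dvd_refl (F - n))
              rwa [show a + (F - n) = j by omega] at this
          have haL : a ∉ S := ih a haj h1a han hsidea
          have := ruleC a haL h1a han
          rwa [show a + (F - n) = j by omega] at this
  -- conclude
  by_cases hDone : F - n = 1
  · have hL : n - 1 ∉ S := chain (n - 1) (by omega) (by omega) (Or.inl hDone)
    exact hcon 1 h1 (n - 1) hL (by omega)
  · by_cases hdvd : (F - n) ∣ (n - 1)
    · have hn3 : 3 ≤ n := by
        by_contra hn
        have hd1 : (F - n) ∣ 1 := by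
          rwa [show n - 1 = 1 by omega] at hdvd
        exact hDone (Nat.dvd_one.mp hd1)
      have hnd2 : ¬ (F - n) ∣ (n - 2) := by
        intro hd
        have : (F - n) ∣ ((n - 1) - (n - 2)) := Nat.dvd_sub hdvd hd
        rw [show (n - 1) - (n - 2) = 1 by omega] at this
        exact hDone (Nat.dvd_one.mp this)
      have hL : n - 2 ∉ S := chain (n - 2) (by omega) (by omega) (Or.inr hnd2)
      exact hcon 2 h2 (n - 2) hL (by omega)
    · have hL : n - 1 ∉ S := chain (n - 1) (by omega) (by omega) (Or.inr hdvd)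
      exact hcon 1 h1 (n - 1) hL (by omega)
end
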